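/- For a C*-category A and objects x, y, the Yoneda functor ι_A sending a ∈ A(x,y) to the operator h_x → h_y given by postcomposition with a is an isometric C*-functor whose image is exactly the compact operators K(h_x, h_y). If A is unital then ι_A is moreover full, i.e. every bounded adjointable operator h_x → h_y is of this form. -/

import Mathlib

universe u u' v v'

open Filter Topology

/-- A (possibly non-unital) C*-category structure on a family of hom-spaces:
a category enriched in complex Banach spaces, with contractive composition and a
conjugate-linear involution satisfying the C*-identity and positivity of elements
of the form `a* ∘ a` (encoded via self-adjoint square roots). -/
class CStarCategory {Obj : Type u} (Hom : Obj → Obj → Type v)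
    [∀ x y, NormedAddCommGroup (Hom x y)] [∀ x y, NormedSpace ℂ (Hom x y)]
    [∀ x y, CompleteSpace (Hom x y)] : Type (max u v) where
  comp : ∀ {x y z : Obj}, Hom y z → Hom x y → Hom x z
  adj : ∀ {x y : Obj}, Hom x y → Hom y x
  comp_assoc : ∀ {w x y z : Obj} (f : Hom y z) (g : Hom x y) (h : Hom w x),
      comp (comp f g) h = comp f (comp g h)
  comp_add_left : ∀ {x y z : Obj} (f f' : Hom y z) (g : Hom x y),
      comp (f + f') g = comp f g + comp f' g
  comp_add_right : ∀ {x y z : Obj} (f : Hom y z) (g g' : Hom x y),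
      comp f (g + g') = comp f g + comp f g'
  comp_smul_left : ∀ {x y z : Obj} (c : ℂ) (f : Hom y z) (g : Hom x y),
      comp (c • f) g = c • comp f g
  comp_smul_right : ∀ {x y z : Obj} (c : ℂ) (f : Hom y z) (g : Hom x y),
      comp f (c • g) = c • comp f g
  norm_comp_le : ∀ {x y z : Obj} (f : Hom y z) (g : Hom x y), ‖comp f g‖ ≤ ‖f‖ * ‖g‖
  adj_adj : ∀ {x y : Obj} (f : Hom x y), adj (adj f) = f
  adj_add : ∀ {x y : Obj} (f g : Hom x y), adj (f + g) = adj f + adj g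
  adj_smul : ∀ {x y : Obj} (c : ℂ) (f : Hom x y), adj (c • f) = (starRingEnd ℂ) c • adj f
  adj_comp : ∀ {x y z : Obj} (f : Hom y z) (g : Hom x y), adj (comp f g) = comp (adj g) (adj f)
  norm_adj_comp_self : ∀ {x y : Obj} (a : Hom x y), ‖comp (adj a) a‖ = ‖a‖ * ‖a‖
  pos_adj_comp_self : ∀ {x y : Obj} (a : Hom x y),
      ∃ b : Hom x x, adj b = b ∧ comp (adj a) a = comp b b

infixl:70 " ⊛ " => CStarCategory.comp
postfix:max "†" => CStarCategory.adj

section CStarBasics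

variable {Obj : Type u} {Hom : Obj → Obj → Type v}
  [∀ x y, NormedAddCommGroup (Hom x y)] [∀ x y, NormedSpace ℂ (Hom x y)]
  [∀ x y, CompleteSpace (Hom x y)] [CStarCategory Hom]

/-- Positivity of an endomorphism in a C*-category: it is of the form `b* ∘ b`. -/
def IsPos {x : Obj} (s : Hom x x) : Prop :=
  ∃ (z : Obj) (b : Hom x z), s = (b†) ⊛ b

/-- An approximate unit for the C*-algebra `Hom x x`: a directed net of positive,
norm-bounded, increasing elements with `‖e_i ∘ c - c‖ → 0` for every `c`. -/
structure IsApproxUnit {ι : Type u'} [Preorder ι] {x : Obj} (e : ι → Hom x x) : Prop where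
  nonempty : Nonempty ι
  directed : ∀ i j : ι, ∃ k, i ≤ k ∧ j ≤ k
  norm_le_one : ∀ i, ‖e i‖ ≤ 1
  pos : ∀ i, IsPos (e i)
  mono : ∀ i j, i ≤ j → IsPos (e j - e i)
  tendsto : ∀ c : Hom x x, Tendsto (fun i => ‖(e i ⊛ c) - c‖) atTop (nhds 0)

end CStarBasics

/-- Unitality, as a property of a C*-category. -/
def IsUnitalCStarCat {Obj : Type u} (Hom : Obj → Obj → Type v)
    [∀ x y, NormedAddCommGroup (Hom x y)] [∀ x y, NormedSpace ℂ (Hom x y)]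
    [∀ x y, CompleteSpace (Hom x y)] [CStarCategory Hom] : Prop :=
  ∀ x : Obj, ∃ e : Hom x x,
    (∀ {y : Obj} (a : Hom y x), e ⊛ a = a) ∧ (∀ {y : Obj} (b : Hom x y), b ⊛ e = b)

/-- A right Hilbert module over a C*-category: a ℂ-linear functor into vector spaces
equipped with `Hom`-valued inner products; each fiber is a Banach space whose norm is
induced by the inner product. -/
structure HilbMod {Obj : Type u} (Hom : Obj → Obj → Type v)
    [∀ x y, NormedAddCommGroup (Hom x y)] [∀ x y, NormedSpace ℂ (Hom x y)]
    [∀ x y, CompleteSpace (Hom x y)] [CStarCategory Hom] : Type (max u (v + 1)) where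
  carrier : Obj → Type v
  [nacg : ∀ x, NormedAddCommGroup (carrier x)]
  [nsp : ∀ x, NormedSpace ℂ (carrier x)]
  [cs : ∀ x, CompleteSpace (carrier x)]
  smulA : ∀ {x w : Obj}, carrier x → Hom w x → carrier w
  inner : ∀ {y z : Obj}, carrier z → carrier y → Hom y z
  smulA_add_left : ∀ {x w : Obj} (e e' : carrier x) (a : Hom w x),
      smulA (e + e') a = smulA e a + smulA e' a
  smulA_add_right : ∀ {x w : Obj} (e : carrier x) (a a' : Hom w x),
      smulA e (a + a') = smulA e a + smulA e a'
  smulA_smul_left : ∀ {x w : Obj} (c : ℂ) (e : carrier x) (a : Hom w x),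
      smulA (c • e) a = c • smulA e a
  smulA_smul_right : ∀ {x w : Obj} (c : ℂ) (e : carrier x) (a : Hom w x),
      smulA e (c • a) = c • smulA e a
  smulA_comp : ∀ {x w v : Obj} (e : carrier x) (a : Hom w x) (b : Hom v w),
      smulA (smulA e a) b = smulA e (a ⊛ b)
  inner_add_left : ∀ {y z : Obj} (e e' : carrier z) (f : carrier y),
      inner (e + e') f = inner e f + inner e' f
  inner_add_right : ∀ {y z : Obj} (e : carrier z) (f f' : carrier y),
      inner e (f + f') = inner e f + inner e f'
  inner_smul_right : ∀ {y z : Obj} (c : ℂ) (e : carrier z) (f : carrier y),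
      inner e (c • f) = c • inner e f
  adj_inner : ∀ {y z : Obj} (e : carrier z) (f : carrier y), (inner e f)† = inner f e
  inner_smulA : ∀ {y z w : Obj} (e : carrier z) (f : carrier y) (a : Hom w y),
      inner e (smulA f a) = inner e f ⊛ a
  inner_self_pos : ∀ {x : Obj} (e : carrier x), ∃ (z : Obj) (b : Hom x z),
      inner e e = (b†) ⊛ b
  inner_self_eq_zero : ∀ {x : Obj} (e : carrier x), inner e e = 0 → e = 0
  norm_eq : ∀ {x : Obj} (e : carrier x), ‖e‖ = Real.sqrt ‖inner e e‖

attribute [instance] HilbMod.nacg HilbMod.nsp HilbMod.cs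

section HilbModBasics

variable {Obj : Type u} {Hom : Obj → Obj → Type v}
  [∀ x y, NormedAddCommGroup (Hom x y)] [∀ x y, NormedSpace ℂ (Hom x y)]
  [∀ x y, CompleteSpace (Hom x y)] [CStarCategory Hom]

theorem HilbMod.inner_zero_left (M : HilbMod Hom) {y z : Obj} (f : M.carrier y) :
    M.inner (0 : M.carrier z) f = 0 := by
  have h := M.inner_add_left (0 : M.carrier z) 0 f
  rw [add_zero] at h
  exact left_eq_add.mp h

theorem HilbMod.inner_zero_right (M : HilbMod Hom) {y z : Obj} (e : M.carrier z) :
    M.inner e (0 : M.carrier y) = 0 := by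
  have h := M.inner_add_right e (0 : M.carrier y) 0
  rw [add_zero] at h
  exact left_eq_add.mp h

theorem HilbMod.inner_smul_left (M : HilbMod Hom) {y z : Obj} (c : ℂ)
    (e : M.carrier z) (f : M.carrier y) :
    M.inner (c • e) f = (starRingEnd ℂ) c • M.inner e f := by
  have h : M.inner (c • e) f = (M.inner f (c • e))† := (M.adj_inner f (c • e)).symm
  rw [h, M.inner_smul_right, CStarCategory.adj_smul, M.adj_inner]

theorem HilbMod.inner_smulA_left (M : HilbMod Hom) {x y w : Obj}
    (f : M.carrier x) (a : Hom w x) (g : M.carrier y) :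
    M.inner (M.smulA f a) g = (a†) ⊛ M.inner f g := by
  have h : M.inner (M.smulA f a) g = (M.inner g (M.smulA f a))† :=
    (M.adj_inner g (M.smulA f a)).symm
  rw [h, M.inner_smulA, CStarCategory.adj_comp, M.adj_inner]

/-- A bounded adjointable operator between Hilbert modules over a C*-category,
encoded by a pair of adjoint maps. -/
structure HilbOp (M N : HilbMod Hom) : Type (max u v) where
  toFun : ∀ x, M.carrier x → N.carrier x
  adjFun : ∀ x, N.carrier x → M.carrier x
  adjoint_prop : ∀ {y z : Obj} (e : M.carrier z) (f : N.carrier y),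
      N.inner (toFun z e) f = M.inner e (adjFun y f)

variable {M N P : HilbMod Hom}

theorem HilbOp.ext' {T S : HilbOp M N} (h1 : ∀ z v, T.toFun z v = S.toFun z v)
    (h2 : ∀ z w, T.adjFun z w = S.adjFun z w) : T = S := by
  cases T with
  | mk tf af ap =>
    cases S with
    | mk tf' af' ap' =>
      have e1 : tf = tf' := funext fun z => funext fun v => h1 z v
      subst e1
      have e2 : af = af' := funext fun z => funext fun w => h2 z w
      subst e2
      rfl

/-- Composition of operators. -/
def HilbOp.comp (S : HilbOp N P) (T : HilbOp M N) : HilbOp M P where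
  toFun z v := S.toFun z (T.toFun z v)
  adjFun z w := T.adjFun z (S.adjFun z w)
  adjoint_prop e f := by rw [S.adjoint_prop, T.adjoint_prop]

/-- The identity operator. -/
def HilbOp.id (M : HilbMod Hom) : HilbOp M M where
  toFun _ v := v
  adjFun _ v := v
  adjoint_prop _ _ := rfl

/-- Adjoint (involution) of an operator. -/
def HilbOp.star (T : HilbOp M N) : HilbOp N M where
  toFun := T.adjFun
  adjFun := T.toFun
  adjoint_prop e f := by
    have h := congrArg CStarCategory.adj (T.adjoint_prop f e)
    rw [N.adj_inner, M.adj_inner] at h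
    exact h.symm

instance : Zero (HilbOp M N) :=
  ⟨{ toFun := fun _ _ => 0
     adjFun := fun _ _ => 0
     adjoint_prop := fun e f => by
       rw [HilbMod.inner_zero_left, HilbMod.inner_zero_right] }⟩

instance : Add (HilbOp M N) :=
  ⟨fun T S =>
    { toFun := fun z v => T.toFun z v + S.toFun z v
      adjFun := fun z w => T.adjFun z w + S.adjFun z w
      adjoint_prop := fun e f => by
        rw [N.inner_add_left, M.inner_add_right, T.adjoint_prop, S.adjoint_prop] }⟩

instance : SMul ℂ (HilbOp M N) :=
  ⟨fun c T =>
    { toFun := fun z v => c • T.toFun z v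
      adjFun := fun z w => (starRingEnd ℂ) c • T.adjFun z w
      adjoint_prop := fun e f => by
        rw [HilbMod.inner_smul_left, M.inner_smul_right, T.adjoint_prop] }⟩

instance : AddCommMonoid (HilbOp M N) where
  add_assoc T S R := HilbOp.ext' (fun z v => add_assoc _ _ _) (fun z w => add_assoc _ _ _)
  zero_add T := HilbOp.ext' (fun z v => zero_add _) (fun z w => zero_add _)
  add_zero T := HilbOp.ext' (fun z v => add_zero _) (fun z w => add_zero _)
  add_comm T S := HilbOp.ext' (fun z v => add_comm _ _) (fun z w => add_comm _ _)
  nsmul := nsmulRec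

/-- The operator norm of an operator between Hilbert modules. -/
noncomputable def opNorm (T : HilbOp M N) : ℝ :=
  sInf {C : ℝ | 0 ≤ C ∧ ∀ (z : Obj) (v : M.carrier z), ‖T.toFun z v‖ ≤ C * ‖v‖}

/-- The rank-one operator `θ^{f,e} : v ↦ f·⟨e,v⟩`. -/
def thetaOp {x : Obj} (f : N.carrier x) (e : M.carrier x) : HilbOp M N where
  toFun z v := N.smulA f (M.inner e v)
  adjFun z w := M.smulA e (N.inner f w)
  adjoint_prop v w := by
    rw [HilbMod.inner_smulA_left, M.adj_inner, M.inner_smulA]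

/-- Compact operators: norm-limits of finite sums of rank-one operators. -/
def IsCompactOp (T : HilbOp M N) : Prop :=
  ∀ ε : ℝ, 0 < ε → ∃ (n : ℕ) (w : Fin n → Obj) (f : ∀ i, N.carrier (w i))
    (e : ∀ i, M.carrier (w i)), ∀ (z : Obj) (v : M.carrier z),
      ‖T.toFun z v - ∑ i, N.smulA (f i) (M.inner (e i) v)‖ ≤ ε * ‖v‖

end HilbModBasics

/-- The representable right Hilbert module `h_x = Hom(-, x)`. -/
def repMod {Obj : Type u} (Hom : Obj → Obj → Type v)
    [∀ x y, NormedAddCommGroup (Hom x y)] [∀ x y, NormedSpace ℂ (Hom x y)]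
    [∀ x y, CompleteSpace (Hom x y)] [CStarCategory Hom] (x : Obj) : HilbMod Hom where
  carrier z := Hom z x
  smulA e a := e ⊛ a
  inner e f := (e†) ⊛ f
  smulA_add_left e e' a := CStarCategory.comp_add_left e e' a
  smulA_add_right e a a' := CStarCategory.comp_add_right e a a'
  smulA_smul_left c e a := CStarCategory.comp_smul_left c e a
  smulA_smul_right c e a := CStarCategory.comp_smul_right c e a
  smulA_comp e a b := CStarCategory.comp_assoc e a b
  inner_add_left e e' f := by
    show ((e + e')†) ⊛ f = ((e†) ⊛ f) + ((e'†) ⊛ f)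
    rw [CStarCategory.adj_add, CStarCategory.comp_add_left]
  inner_add_right e f f' := CStarCategory.comp_add_right _ f f'
  inner_smul_right c e f := CStarCategory.comp_smul_right c _ f
  adj_inner e f := by rw [CStarCategory.adj_comp, CStarCategory.adj_adj]
  inner_smulA e f a := (CStarCategory.comp_assoc _ f a).symm
  inner_self_pos e := ⟨x, e, rfl⟩
  inner_self_eq_zero := by
    intro z e h
    have h' : (e†) ⊛ e = 0 := h
    have h2 := CStarCategory.norm_adj_comp_self (Hom := Hom) e
    rw [h', norm_zero] at h2
    have h3 : ‖e‖ = 0 := by nlinarith [norm_nonneg e]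
    exact norm_eq_zero.mp h3
  norm_eq := by
    intro z e
    rw [CStarCategory.norm_adj_comp_self, Real.sqrt_mul_self (norm_nonneg e)]

section YonedaOps

variable {Obj : Type u} {Hom : Obj → Obj → Type v}
  [∀ x y, NormedAddCommGroup (Hom x y)] [∀ x y, NormedSpace ℂ (Hom x y)]
  [∀ x y, CompleteSpace (Hom x y)] [CStarCategory Hom]

/-- The operator `ε_m : h_x → M` sending `a` to `m·a`; its adjoint is `f ↦ ⟨m,f⟩`. -/
def epsOp {M : HilbMod Hom} {x : Obj} (m : M.carrier x) : HilbOp (repMod Hom x) M where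
  toFun z a := M.smulA m a
  adjFun z f := M.inner m f
  adjoint_prop a f := HilbMod.inner_smulA_left M m a f

/-- The Yoneda operator `h_x → h_y` given by postcomposition with `a : Hom x y`. -/
def yonedaOp {x y : Obj} (a : Hom x y) : HilbOp (repMod Hom x) (repMod Hom y) where
  toFun z b := a ⊛ b
  adjFun z c := (a†) ⊛ c
  adjoint_prop b c := by
    show ((a ⊛ b)†) ⊛ c = (b†) ⊛ ((a†) ⊛ c)
    exact (congrArg (fun t => t ⊛ c) (CStarCategory.adj_comp (Hom := Hom) a b)).trans
      (CStarCategory.comp_assoc _ _ _)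

end YonedaOps

/-! An adjointable operator is determined by its underlying map, so the algebraic properties of
the Yoneda operators are those of postcomposition. Isometry is the C*-identity: testing
`yonedaOp a` on `a†` gives `‖a‖² = ‖a ⊛ a†‖ ≤ C ‖a‖`. A finite sum `∑ θ^{fᵢ,eᵢ}` on `h_x → h_y`
is postcomposition with `∑ fᵢ ⊛ eᵢ†`; since the Yoneda map is isometric and `Hom x y` is complete,
norm-limits of such sums are again postcompositions. Conversely `yonedaOp a` is compact because
`a ≈ a ⊛ u` for `u` in an approximate unit of the C*-algebra `Hom x x`, whence
`yonedaOp a ≈ θ^{a,u†}`. In the unital case every adjointable operator is a module map, so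
`T v = T (1 ⊛ v) = T 1 ⊛ v`. -/

namespace CStarCategory

variable {Obj : Type u} {Hom : Obj → Obj → Type v}
  [∀ x y, NormedAddCommGroup (Hom x y)] [∀ x y, NormedSpace ℂ (Hom x y)]
  [∀ x y, CompleteSpace (Hom x y)] [CStarCategory Hom]

def compLeftHom {x y : Obj} (z : Obj) (g : Hom x y) : Hom y z →+ Hom x z :=
  AddMonoidHom.mk' (· ⊛ g) fun f f' => comp_add_left f f' g

def compRightHom {y z : Obj} (x : Obj) (f : Hom y z) : Hom x y →+ Hom x z :=
  AddMonoidHom.mk' (f ⊛ ·) (comp_add_right f)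

def adjAddHom (x y : Obj) : Hom x y →+ Hom y x :=
  AddMonoidHom.mk' adj adj_add

theorem zero_comp {x y z : Obj} (g : Hom x y) : (0 : Hom y z) ⊛ g = 0 :=
  map_zero (compLeftHom z g)

theorem comp_zero {x y z : Obj} (f : Hom y z) : f ⊛ (0 : Hom x y) = 0 :=
  map_zero (compRightHom x f)

theorem comp_sub_left {x y z : Obj} (f f' : Hom y z) (g : Hom x y) :
    (f - f') ⊛ g = f ⊛ g - f' ⊛ g :=
  map_sub (compLeftHom z g) f f'

theorem comp_sub_right {x y z : Obj} (f : Hom y z) (g g' : Hom x y) :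
    f ⊛ (g - g') = f ⊛ g - f ⊛ g' :=
  map_sub (compRightHom x f) g g'

theorem adj_sub {x y : Obj} (f g : Hom x y) : (f - g)† = (f†) - (g†) :=
  map_sub (adjAddHom x y) f g

theorem sum_comp {ι : Type*} {x y z : Obj} (s : Finset ι) (f : ι → Hom y z) (g : Hom x y) :
    (∑ i ∈ s, f i) ⊛ g = ∑ i ∈ s, f i ⊛ g :=
  map_sum (compLeftHom z g) f s

theorem continuous_comp_left {x y z : Obj} (g : Hom x y) :
    Continuous fun f : Hom y z => f ⊛ g :=
  AddMonoidHomClass.continuous_of_bound (compLeftHom z g) ‖g‖ fun f =>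
    (norm_comp_le f g).trans_eq (mul_comm _ _)

theorem norm_le_norm_adj {x y : Obj} (a : Hom x y) : ‖a‖ ≤ ‖a†‖ := by
  rcases (norm_nonneg a).eq_or_lt' with h0 | h0
  · exact h0.le.trans (norm_nonneg _)
  · refine le_of_mul_le_mul_right ?_ h0
    rw [← norm_adj_comp_self]
    exact norm_comp_le _ _

theorem norm_adj {x y : Obj} (a : Hom x y) : ‖a†‖ = ‖a‖ :=
  le_antisymm (by simpa only [adj_adj] using norm_le_norm_adj (a†)) (norm_le_norm_adj a)

theorem norm_comp_adj_self {x y : Obj} (a : Hom x y) : ‖a ⊛ (a†)‖ = ‖a‖ * ‖a‖ := by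
  simpa only [adj_adj, norm_adj] using norm_adj_comp_self (a†)

theorem norm_le_of_forall_norm_comp_le {x y : Obj} (a : Hom x y) {C : ℝ} (hC : 0 ≤ C)
    (h : ∀ (z : Obj) (v : Hom z x), ‖a ⊛ v‖ ≤ C * ‖v‖) : ‖a‖ ≤ C := by
  rcases (norm_nonneg a).eq_or_lt' with h0 | h0
  · exact h0.le.trans hC
  · refine le_of_mul_le_mul_right ?_ h0
    simpa only [norm_comp_adj_self, norm_adj] using h y (a†)

noncomputable instance endNonUnitalNormedRing (x : Obj) : NonUnitalNormedRing (Hom x x) :=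
  { (inferInstance : NormedAddCommGroup (Hom x x)) with
    mul := comp
    left_distrib := comp_add_right
    right_distrib := comp_add_left
    mul_assoc := comp_assoc
    zero_mul := zero_comp
    mul_zero := comp_zero
    norm_mul_le := norm_comp_le }

instance endStarRing (x : Obj) : StarRing (Hom x x) where
  star := adj
  star_involutive := adj_adj
  star_mul := adj_comp
  star_add := adj_add

instance endCStarRing (x : Obj) : CStarRing (Hom x x) where
  norm_mul_self_le a := (norm_adj_comp_self a).ge

instance endIsScalarTower (x : Obj) : IsScalarTower ℂ (Hom x x) (Hom x x) where
  smul_assoc := comp_smul_left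

instance endSMulCommClass (x : Obj) : SMulCommClass ℂ (Hom x x) (Hom x x) where
  smul_comm c a b := (comp_smul_right c a b).symm

instance endStarModule (x : Obj) : StarModule ℂ (Hom x x) where
  star_smul := adj_smul

noncomputable instance endNonUnitalCStarAlgebra (x : Obj) :
    NonUnitalCStarAlgebra (Hom x x) where

/-- Formally `(1 - u)† (a† a) (1 - u)`, written without a unit. -/
theorem adj_comp_self_sub_comp {x y : Obj} (a : Hom x y) (u : Hom x x) :
    ((a - a ⊛ u)†) ⊛ (a - a ⊛ u)
      = ((a†) ⊛ a - ((a†) ⊛ a) ⊛ u) - (u†) ⊛ ((a†) ⊛ a - ((a†) ⊛ a) ⊛ u) := by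
  rw [adj_sub, adj_comp, comp_sub_left, comp_sub_right, comp_sub_right, comp_sub_right,
    comp_assoc (u†), comp_assoc (u†), comp_assoc (a†) a u]

theorem norm_sub_comp_mul_self_le {x y : Obj} (a : Hom x y) (u : Hom x x) :
    ‖a - a ⊛ u‖ * ‖a - a ⊛ u‖ ≤ (1 + ‖u‖) * ‖(a†) ⊛ a - ((a†) ⊛ a) ⊛ u‖ := by
  rw [← norm_adj_comp_self, adj_comp_self_sub_comp]
  refine (norm_sub_le _ _).trans ?_
  rw [add_mul, one_mul, ← norm_adj u]
  gcongr
  exact norm_comp_le _ _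

theorem exists_norm_sub_comp_le {x y : Obj} (a : Hom x y) {ε : ℝ} (hε : 0 < ε) :
    ∃ u : Hom x x, ‖a - a ⊛ u‖ ≤ ε := by
  -- The canonical approximate unit is defined through the spectral order of `Hom x x`.
  let _ := CStarAlgebra.spectralOrder (Hom x x)
  have := CStarAlgebra.spectralOrderedRing (Hom x x)
  have hunit := CStarAlgebra.increasingApproximateUnit (Hom x x)
  have hclose := Metric.tendsto_nhds.mp (hunit.tendsto_mul_left ((a†) ⊛ a)) (ε * ε / 2)
    (by positivity)
  obtain ⟨u, hu, hnorm⟩ := (hclose.and hunit.eventually_norm).exists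
  refine ⟨u, (mul_self_le_mul_self_iff (norm_nonneg _) hε.le).mpr ?_⟩
  rw [dist_eq_norm, norm_sub_rev] at hu
  change ‖(a†) ⊛ a - ((a†) ⊛ a) ⊛ u‖ < ε * ε / 2 at hu
  calc ‖a - a ⊛ u‖ * ‖a - a ⊛ u‖ ≤ (1 + ‖u‖) * ‖(a†) ⊛ a - ((a†) ⊛ a) ⊛ u‖ :=
        norm_sub_comp_mul_self_le a u
    _ ≤ 2 * (ε * ε / 2) := by gcongr; linarith
    _ = ε * ε := by ring

theorem exists_eq_comp_of_forall_approx {x y : Obj} (F : ∀ z, Hom z x → Hom z y)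
    (hF : ∀ ε > 0, ∃ b : Hom x y, ∀ z (v : Hom z x), ‖F z v - b ⊛ v‖ ≤ ε * ‖v‖) :
    ∃ a : Hom x y, ∀ z (v : Hom z x), F z v = a ⊛ v := by
  choose b hb using fun n : ℕ => hF (1 / ((n : ℝ) + 1)) Nat.one_div_pos_of_nat
  have hdist : ∀ n m : ℕ, dist (b n) (b m) ≤ 1 / ((n : ℝ) + 1) + 1 / ((m : ℝ) + 1) := by
    intro n m
    rw [dist_eq_norm]
    refine norm_le_of_forall_norm_comp_le _ (by positivity) fun z v => ?_
    calc ‖(b n - b m) ⊛ v‖ = ‖(F z v - b m ⊛ v) - (F z v - b n ⊛ v)‖ := by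
          rw [comp_sub_left, sub_sub_sub_cancel_left]
      _ ≤ ‖F z v - b m ⊛ v‖ + ‖F z v - b n ⊛ v‖ := norm_sub_le _ _
      _ ≤ _ := by linarith [hb n z v, hb m z v]
  have hcauchy : CauchySeq b := by
    refine cauchySeq_of_le_tendsto_0' (fun N : ℕ => 2 * (1 / ((N : ℝ) + 1))) (fun n m hnm => ?_) ?_
    · refine (hdist n m).trans ?_
      have : 1 / ((m : ℝ) + 1) ≤ 1 / ((n : ℝ) + 1) := Nat.one_div_le_one_div hnm
      linarith
    · simpa only [mul_zero] using tendsto_one_div_add_atTop_nhds_zero_nat.const_mul (2 : ℝ)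
  obtain ⟨a, ha⟩ := cauchySeq_tendsto_of_complete hcauchy
  refine ⟨a, fun z v => tendsto_nhds_unique ?_ ((continuous_comp_left v).tendsto a |>.comp ha)⟩
  rw [tendsto_iff_norm_sub_tendsto_zero]
  refine squeeze_zero (fun _ => norm_nonneg _) (fun n => (norm_sub_rev _ _).trans_le (hb n z v))
    ?_
  simpa using tendsto_one_div_add_atTop_nhds_zero_nat.mul_const ‖v‖

end CStarCategory

namespace HilbMod

variable {Obj : Type u} {Hom : Obj → Obj → Type v}
  [∀ x y, NormedAddCommGroup (Hom x y)] [∀ x y, NormedSpace ℂ (Hom x y)]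
  [∀ x y, CompleteSpace (Hom x y)] [CStarCategory Hom] (M : HilbMod Hom)

theorem inner_sub_left {y z : Obj} (e e' : M.carrier z) (f : M.carrier y) :
    M.inner (e - e') f = M.inner e f - M.inner e' f :=
  map_sub (AddMonoidHom.mk' (M.inner · f) fun e e' => M.inner_add_left e e' f) e e'

theorem ext_of_inner_left {z : Obj} {d d' : M.carrier z}
    (h : ∀ {w : Obj} (f : M.carrier w), M.inner d f = M.inner d' f) : d = d' := by
  refine sub_eq_zero.mp (M.inner_self_eq_zero _ ?_)
  rw [inner_sub_left, h, sub_self]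

theorem ext_of_inner_right {z : Obj} {d d' : M.carrier z}
    (h : ∀ {w : Obj} (e : M.carrier w), M.inner e d = M.inner e d') : d = d' :=
  M.ext_of_inner_left fun f => by rw [← M.adj_inner, h, M.adj_inner]

end HilbMod

namespace HilbOp

variable {Obj : Type u} {Hom : Obj → Obj → Type v}
  [∀ x y, NormedAddCommGroup (Hom x y)] [∀ x y, NormedSpace ℂ (Hom x y)]
  [∀ x y, CompleteSpace (Hom x y)] [CStarCategory Hom] {M N : HilbMod Hom}

theorem ext_toFun {T S : HilbOp M N} (h : ∀ z v, T.toFun z v = S.toFun z v) : T = S :=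
  HilbOp.ext' h fun _ _ => M.ext_of_inner_right fun e => by
    rw [← T.adjoint_prop, h, S.adjoint_prop]

theorem toFun_smulA (T : HilbOp M N) {x w : Obj} (m : M.carrier x) (a : Hom w x) :
    T.toFun w (M.smulA m a) = N.smulA (T.toFun x m) a :=
  N.ext_of_inner_left fun f => by
    rw [T.adjoint_prop, HilbMod.inner_smulA_left, HilbMod.inner_smulA_left, T.adjoint_prop]

end HilbOp

section Yoneda

open CStarCategory

variable {Obj : Type u} {Hom : Obj → Obj → Type v}
  [∀ x y, NormedAddCommGroup (Hom x y)] [∀ x y, NormedSpace ℂ (Hom x y)]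
  [∀ x y, CompleteSpace (Hom x y)] [CStarCategory Hom]

theorem yonedaOp_add {x y : Obj} (a b : Hom x y) : yonedaOp (a + b) = yonedaOp a + yonedaOp b :=
  HilbOp.ext_toFun fun _ v => comp_add_left a b v

theorem yonedaOp_smul {x y : Obj} (c : ℂ) (a : Hom x y) : yonedaOp (c • a) = c • yonedaOp a :=
  HilbOp.ext_toFun fun _ v => comp_smul_left c a v

theorem yonedaOp_comp {x y z : Obj} (a : Hom y z) (b : Hom x y) :
    yonedaOp (a ⊛ b) = (yonedaOp a).comp (yonedaOp b) :=
  HilbOp.ext_toFun fun _ v => comp_assoc a b v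

theorem star_yonedaOp {x y : Obj} (a : Hom x y) : (yonedaOp a).star = yonedaOp (a†) :=
  HilbOp.ext_toFun fun _ _ => rfl

theorem opNorm_yonedaOp {x y : Obj} (a : Hom x y) : opNorm (yonedaOp a) = ‖a‖ :=
  IsLeast.csInf_eq ⟨⟨norm_nonneg a, fun _ v => norm_comp_le a v⟩,
    fun _ hC => norm_le_of_forall_norm_comp_le a hC.1 hC.2⟩

theorem sum_smulA_inner_eq_yonedaOp_toFun {ι : Type*} [Fintype ι] {x y z : Obj} {w : ι → Obj}
    (f : ∀ i, (repMod Hom y).carrier (w i)) (e : ∀ i, (repMod Hom x).carrier (w i))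
    (v : (repMod Hom x).carrier z) :
    ∑ i, (repMod Hom y).smulA (f i) ((repMod Hom x).inner (e i) v)
      = (yonedaOp (∑ i, f i ⊛ (e i)†)).toFun z v :=
  ((sum_comp _ _ _).trans (Finset.sum_congr rfl fun _ _ => comp_assoc _ _ _)).symm

theorem norm_yonedaOp_toFun_sub_le {x y z : Obj} (a b : Hom x y) (v : (repMod Hom x).carrier z) :
    ‖(yonedaOp a).toFun z v - (yonedaOp b).toFun z v‖ ≤ ‖a - b‖ * ‖v‖ :=
  (congrArg norm (comp_sub_left a b v)).symm.trans_le (norm_comp_le _ _)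

theorem isCompactOp_yonedaOp {x y : Obj} (a : Hom x y) : IsCompactOp (yonedaOp a) := by
  intro ε hε
  obtain ⟨u, hu⟩ := exists_norm_sub_comp_le a hε
  refine ⟨1, fun _ => x, fun _ => a, fun _ => u†, fun z v => ?_⟩
  rw [sum_smulA_inner_eq_yonedaOp_toFun (fun _ => a) (fun _ => u†) v, Fin.sum_univ_one, adj_adj]
  exact (norm_yonedaOp_toFun_sub_le _ _ v).trans (by gcongr)

theorem exists_eq_yonedaOp_of_isCompactOp {x y : Obj}
    (T : HilbOp (repMod Hom x) (repMod Hom y)) (hT : IsCompactOp T) :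
    ∃ a : Hom x y, T = yonedaOp a := by
  obtain ⟨a, ha⟩ := exists_eq_comp_of_forall_approx T.toFun fun ε hε => by
    obtain ⟨n, w, f, e, hfe⟩ := hT ε hε
    refine ⟨∑ i, f i ⊛ (e i)†, fun z v => ?_⟩
    have h := hfe z v
    rwa [sum_smulA_inner_eq_yonedaOp_toFun f e v] at h
  exact ⟨a, HilbOp.ext_toFun ha⟩

theorem eq_yonedaOp_of_left_unit {x y : Obj} (T : HilbOp (repMod Hom x) (repMod Hom y))
    {e : Hom x x} (he : ∀ {w : Obj} (v : Hom w x), e ⊛ v = v) :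
    T = yonedaOp (T.toFun x e) :=
  HilbOp.ext_toFun fun z v => (congrArg (T.toFun z) (he v).symm).trans (T.toFun_smulA e v)

end Yoneda

/-- The Yoneda functor sending `a : A(x,y)` to the operator
`h_x → h_y` of postcomposition with `a` is an isometric C*-functor whose image is
exactly the compact operators `K(h_x, h_y)`.  If `A` is unital, it is moreover full:
every bounded adjointable operator `h_x → h_y` is of this form. -/
theorem yoneda_isometric_onto_compacts {Obj : Type u} {Hom : Obj → Obj → Type v}
    [∀ x y, NormedAddCommGroup (Hom x y)] [∀ x y, NormedSpace ℂ (Hom x y)]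
    [∀ x y, CompleteSpace (Hom x y)] [CStarCategory Hom] :
    (∀ {x y : Obj} (a b : Hom x y) (c : ℂ),
      yonedaOp (a + b) = yonedaOp a + yonedaOp b ∧ yonedaOp (c • a) = c • yonedaOp a) ∧
    (∀ {x y z : Obj} (a : Hom y z) (b : Hom x y),
      yonedaOp (a ⊛ b) = (yonedaOp a).comp (yonedaOp b)) ∧
    (∀ {x y : Obj} (a : Hom x y), HilbOp.star (yonedaOp a) = yonedaOp (a†)) ∧
    (∀ {x y : Obj} (a : Hom x y), opNorm (yonedaOp a) = ‖a‖) ∧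
    (∀ {x y : Obj} (a : Hom x y), IsCompactOp (yonedaOp a)) ∧
    (∀ {x y : Obj} (T : HilbOp (repMod Hom x) (repMod Hom y)),
      IsCompactOp T → ∃ a : Hom x y, T = yonedaOp a) ∧
    (IsUnitalCStarCat Hom →
      ∀ {x y : Obj} (T : HilbOp (repMod Hom x) (repMod Hom y)),
        ∃ a : Hom x y, T = yonedaOp a) := by
  refine ⟨fun a b c => ⟨yonedaOp_add a b, yonedaOp_smul c a⟩, yonedaOp_comp, star_yonedaOp,
    opNorm_yonedaOp, isCompactOp_yonedaOp, exists_eq_yonedaOp_of_isCompactOp,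
    fun hunital x _ T => ?_⟩
  obtain ⟨e, he, -⟩ := hunital x
  exact ⟨_, eq_yonedaOp_of_left_unit T he⟩
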